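/- arXiv:1910.00827 — 4 statements merged into one kernel-verified Lean document; each statement's English description precedes it below -/
import Mathlib

section
/- Let U ⊆ ℝ² be a nonempty open connected set and let v : U → ℝ² be twice continuously differentiable with vanishing symmetric gradient on U, i.e. ∂₁v₁ = 0, ∂₂v₂ = 0 and ∂₁v₂ + ∂₂v₁ = 0 on U. Then there exist c ∈ ℝ² and θ ∈ ℝ such that v(x) = c + θ·(−x₂, x₁) for all x ∈ U; that is, the kernel of the symmetric gradient operator consists exactly of the linearized rigid body motions. -/
lemma aux_const {E F : Type*} [NormedAddCommGroup E] [NormedSpace ℝ E]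
    [NormedAddCommGroup F] [NormedSpace ℝ F] {U : Set E} (hU : IsOpen U)
    (hconn : IsPreconnected U) {f : E → F}
    (hf : ∀ x ∈ U, DifferentiableAt ℝ f x)
    (hf' : ∀ x ∈ U, fderiv ℝ f x = 0) {x₀ : E} (hx₀ : x₀ ∈ U) :
    ∀ x ∈ U, f x = f x₀ := by
  have loc : ∀ x ∈ U, ∃ ε > 0, Metric.ball x ε ⊆ U ∧ ∀ y ∈ Metric.ball x ε, f y = f x := by
    intro x hx
    obtain ⟨ε, εpos, hball⟩ := Metric.isOpen_iff.1 hU x hx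
    refine ⟨ε, εpos, hball, fun y hy => ?_⟩
    refine (convex_ball x ε).is_const_of_fderivWithin_eq_zero
      (fun z hz => (hf z (hball hz)).differentiableWithinAt) (fun z hz => ?_) hy
      (Metric.mem_ball_self εpos)
    rw [fderivWithin_of_isOpen Metric.isOpen_ball hz]
    exact hf' z (hball hz)
  classical
  by_contra h
  push_neg at h
  obtain ⟨x₁, hx₁, hne⟩ := h
  set V : Set E := {x | ∃ ε > 0, Metric.ball x ε ⊆ U ∧ ∀ y ∈ Metric.ball x ε, f y = f x₀} with hV
  set W : Set E := {x | ∃ ε > 0, Metric.ball x ε ⊆ U ∧ ∀ y ∈ Metric.ball x ε, f y ≠ f x₀} with hW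
  have hVo : IsOpen V := by
    apply Metric.isOpen_iff.2
    rintro x ⟨ε, εpos, hb, hc⟩
    exact ⟨ε, εpos, fun y hy => ⟨ε - dist y x, by simp [dist_comm] at hy ⊢; linarith,
      fun z hz => hb (by simp only [Metric.mem_ball] at *; have := dist_triangle z y x; linarith),
      fun z hz => hc z (by simp only [Metric.mem_ball] at *; have := dist_triangle z y x; linarith)⟩⟩
  have hWo : IsOpen W := by
    apply Metric.isOpen_iff.2
    rintro x ⟨ε, εpos, hb, hc⟩
    exact ⟨ε, εpos, fun y hy => ⟨ε - dist y x, by simp [dist_comm] at hy ⊢; linarith,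
      fun z hz => hb (by simp only [Metric.mem_ball] at *; have := dist_triangle z y x; linarith),
      fun z hz => hc z (by simp only [Metric.mem_ball] at *; have := dist_triangle z y x; linarith)⟩⟩
  have hsub : U ⊆ V ∪ W := by
    intro x hx
    obtain ⟨ε, εpos, hb, hc⟩ := loc x hx
    by_cases hfx : f x = f x₀
    · exact Or.inl ⟨ε, εpos, hb, fun y hy => (hc y hy).trans hfx⟩
    · exact Or.inr ⟨ε, εpos, hb, fun y hy => (hc y hy).symm ▸ hfx⟩
  have hne1 : (U ∩ V).Nonempty := by
    obtain ⟨ε, εpos, hb, hc⟩ := loc x₀ hx₀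
    exact ⟨x₀, hx₀, ε, εpos, hb, hc⟩
  have hne2 : (U ∩ W).Nonempty := by
    obtain ⟨ε, εpos, hb, hc⟩ := loc x₁ hx₁
    exact ⟨x₁, hx₁, ε, εpos, hb, fun y hy => (hc y hy).symm ▸ hne⟩
  obtain ⟨z, _, hzV, hzW⟩ := hconn V W hVo hWo hsub hne1 hne2
  obtain ⟨ε₁, h1, _, hc1⟩ := hzV
  obtain ⟨ε₂, h2, _, hc2⟩ := hzW
  exact hc2 z (Metric.mem_ball_self h2) (hc1 z (Metric.mem_ball_self h1))

/-- Let `U ⊆ ℝ²` be a nonempty open connected set and `v : U → ℝ²` twice continuously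
differentiable with vanishing symmetric gradient on `U` (`∂₁v₁ = 0`, `∂₂v₂ = 0`,
`∂₁v₂ + ∂₂v₁ = 0`).  Then `v` is a linearized rigid body motion: there exist `c ∈ ℝ²` and
`θ ∈ ℝ` with `v(x) = c + θ·(−x₂, x₁)` on `U`. -/
theorem kernel_symmetric_gradient (U : Set (Fin 2 → ℝ)) (hU : IsOpen U)
    (hconn : IsConnected U) (v : (Fin 2 → ℝ) → (Fin 2 → ℝ))
    (hv : ContDiffOn ℝ 2 v U)
    (h11 : ∀ x ∈ U, fderiv ℝ v x ![1, 0] 0 = 0)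
    (h22 : ∀ x ∈ U, fderiv ℝ v x ![0, 1] 1 = 0)
    (h12 : ∀ x ∈ U, fderiv ℝ v x ![1, 0] 1 + fderiv ℝ v x ![0, 1] 0 = 0) :
    ∃ c : Fin 2 → ℝ, ∃ θ : ℝ, ∀ x ∈ U, v x = c + θ • ![-(x 1), x 0] := by
  obtain ⟨x₀, hx₀⟩ := hconn.nonempty

  have hdv : ∀ x ∈ U, DifferentiableAt ℝ v x := fun x hx =>
    (hv.differentiableOn (by norm_num)).differentiableAt (hU.mem_nhds hx)
  have hg : ContDiffOn ℝ 1 (fderiv ℝ v) U := hv.fderiv_of_isOpen hU (by norm_num)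
  have hdg : ∀ x ∈ U, DifferentiableAt ℝ (fderiv ℝ v) x := fun x hx =>
    (hg.differentiableOn (by norm_num)).differentiableAt (hU.mem_nhds hx)
  have hB : ∀ x ∈ U, fderiv ℝ (fderiv ℝ v) x = 0 := by
    intro x hx
    set B := fderiv ℝ (fderiv ℝ v) x with hBdef
    have hB' : HasFDerivAt (fderiv ℝ v) B x := (hdg x hx).hasFDerivAt
    have hsymm : ∀ u w : Fin 2 → ℝ, B u w = B w u := by
      intro u w
      refine second_derivative_symmetric_of_eventually (f := v) ?_ hB' u w
      filter_upwards [hU.mem_nhds hx] with y hy using (hdv y hy).hasFDerivAt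
    have key : ∀ (ψ : ((Fin 2 → ℝ) →L[ℝ] (Fin 2 → ℝ)) →L[ℝ] ℝ), (∀ y ∈ U, ψ (fderiv ℝ v y) = 0) →
        ∀ w : Fin 2 → ℝ, ψ (B w) = 0 := by
      intro ψ he w
      have hψ : HasFDerivAt (fun y => ψ (fderiv ℝ v y)) (ψ.comp B) x :=
        ψ.hasFDerivAt.comp x hB'
      have h0 : HasFDerivAt (fun y => ψ (fderiv ℝ v y)) (0 : (Fin 2 → ℝ) →L[ℝ] ℝ) x := by
        refine (hasFDerivAt_const (0 : ℝ) x).congr_of_eventuallyEq ?_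
        filter_upwards [hU.mem_nhds hx] with y hy using he y hy
      have := hψ.unique h0
      have := congrFun (congrArg DFunLike.coe this) w
      simpa using this
    have ψe : ∀ (e : Fin 2 → ℝ) (i : Fin 2), ∃ ψ : ((Fin 2 → ℝ) →L[ℝ] (Fin 2 → ℝ)) →L[ℝ] ℝ,
        ∀ A : (Fin 2 → ℝ) →L[ℝ] (Fin 2 → ℝ), ψ A = A e i := by
      intro e i
      exact ⟨(ContinuousLinearMap.proj i).comp (ContinuousLinearMap.apply ℝ (Fin 2 → ℝ) e),
        fun A => rfl⟩
    obtain ⟨ψ1, hψ1⟩ := ψe ![1, 0] 0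
    obtain ⟨ψ2, hψ2⟩ := ψe ![0, 1] 1
    obtain ⟨ψ3, hψ3⟩ := ψe ![1, 0] 1
    obtain ⟨ψ4, hψ4⟩ := ψe ![0, 1] 0
    have a1 : ∀ w : Fin 2 → ℝ, B w ![1, 0] 0 = 0 := by
      intro w; have := key ψ1 (fun y hy => (hψ1 _).trans (h11 y hy)) w
      rwa [hψ1] at this
    have a2 : ∀ w : Fin 2 → ℝ, B w ![0, 1] 1 = 0 := by
      intro w; have := key ψ2 (fun y hy => (hψ2 _).trans (h22 y hy)) w
      rwa [hψ2] at this
    have a3 : ∀ w : Fin 2 → ℝ, B w ![1, 0] 1 + B w ![0, 1] 0 = 0 := by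
      intro w
      have := key (ψ3 + ψ4) (fun y hy => by
        simp only [ContinuousLinearMap.add_apply, hψ3, hψ4]; exact h12 y hy) w
      simpa [ContinuousLinearMap.add_apply, hψ3, hψ4] using this
    -- all basis second derivatives vanish
    have b10 : B ![1, 0] ![0, 1] 0 = 0 := (hsymm ![1, 0] ![0, 1]).symm ▸ a1 ![0, 1]
    have b01 : B ![0, 1] ![1, 0] 1 = 0 := (hsymm ![0, 1] ![1, 0]).symm ▸ a2 ![1, 0]
    have c001 : B ![1, 0] ![1, 0] 1 = 0 := by have := a3 ![1, 0]; rw [b10] at this; linarith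
    have c110 : B ![0, 1] ![0, 1] 0 = 0 := by have := a3 ![0, 1]; rw [b01] at this; linarith
    have hall : ∀ w u : Fin 2 → ℝ, B w u = 0 := by
      intro w u
      have hw : w = w 0 • ![1, 0] + w 1 • ![(0:ℝ), 1] := by
        funext j; fin_cases j <;> simp
      have hu : u = u 0 • ![1, 0] + u 1 • ![(0:ℝ), 1] := by
        funext j; fin_cases j <;> simp
      rw [hw, hu]
      funext i
      simp only [map_add, map_smul, ContinuousLinearMap.add_apply,
        ContinuousLinearMap.smul_apply, Pi.add_apply, Pi.smul_apply, smul_eq_mul]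
      fin_cases i <;>
        simp [a1, a2, b10, b01, c001, c110, hsymm ![1, 0] ![0, 1]]
    refine ContinuousLinearMap.ext fun w => ContinuousLinearMap.ext fun u => ?_
    simpa using hall w u
  have hgconst : ∀ x ∈ U, fderiv ℝ v x = fderiv ℝ v x₀ :=
    aux_const hU hconn.isPreconnected hdg hB hx₀
  set A := fderiv ℝ v x₀ with hA
  set θ := A ![1, 0] 1 with hθ
  have hA10 : A ![1, 0] 0 = 0 := h11 x₀ hx₀
  have hA21 : A ![0, 1] 1 = 0 := h22 x₀ hx₀
  have hA20 : A ![0, 1] 0 = -θ := by have := h12 x₀ hx₀; rw [hθ]; linarith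
  have hAu : ∀ u : Fin 2 → ℝ, A u = θ • ![-(u 1), u 0] := by
    intro u
    have hu : u = u 0 • ![1, 0] + u 1 • ![(0:ℝ), 1] := by
      funext j; fin_cases j <;> simp
    rw [hu]
    funext i
    simp only [map_add, map_smul, Pi.add_apply, Pi.smul_apply, smul_eq_mul]
    fin_cases i <;> simp [hA10, hA21, hA20] <;> ring
  have hwd : ∀ x ∈ U, DifferentiableAt ℝ (fun y => v y - A y) x := fun x hx =>
    (hdv x hx).sub A.differentiableAt
  have hwz : ∀ x ∈ U, fderiv ℝ (fun y => v y - A y) x = 0 := by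
    intro x hx
    have h1 : HasFDerivAt v A x := hgconst x hx ▸ (hdv x hx).hasFDerivAt
    have h2 : HasFDerivAt (fun y => v y - A y) (A - A) x := h1.sub A.hasFDerivAt
    rw [sub_self] at h2
    exact h2.fderiv
  have hc := aux_const hU hconn.isPreconnected hwd hwz hx₀
  refine ⟨v x₀ - A x₀, θ, fun x hx => ?_⟩
  have := hc x hx
  have hvx : v x = (v x₀ - A x₀) + A x := by
    rw [← this]; abel
  rw [hvx, hAu x]
end

section
/- (Stability of the rigid-type interpolant.) Let m ≥ 1 be an integer, L > 0, c > 0, M > 0. Let ρ : [0, L] → ℝ² be m-times continuously differentiable with ‖ρ^{(m)}(t)‖ ≤ M for all t ∈ [0, L] and with ‖ρ(L) − ρ(0)‖ ≥ c·L. Let u : [0, L] → ℝ² be absolutely continuous with u' ∈ L²(0, L). Define the rigid-type interpolant u_I^R(t) = u(0) + 𝔸(ρ(t)) 𝔹⁻¹ (u(L) − u(0)), where 𝔸 is anchored at ν̄ = ρ(0) and 𝔹 is formed from ν̄ = ρ(0), ν' = ρ(L). Then ‖(u_I^R)^{(m)}‖_{L²(0,L)} ≤ (M/c) · ‖u'‖_{L²(0,L)}.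 -/
open MeasureTheory intervalIntegral

/-- The matrix field `𝔸(x)` anchored at `ν`. -/
def matA (ν x : Fin 2 → ℝ) : Matrix (Fin 2) (Fin 2) ℝ :=
  !![x 0 - ν 0, -(x 1 - ν 1); x 1 - ν 1, x 0 - ν 0]

/-- The matrix `𝔹 = [[ν'₁ − ν̄₁, −(ν'₂ − ν̄₂)], [ν'₂ − ν̄₂, ν'₁ − ν̄₁]]`. -/
def matB (ν ν' : Fin 2 → ℝ) : Matrix (Fin 2) (Fin 2) ℝ :=
  !![ν' 0 - ν 0, -(ν' 1 - ν 1); ν' 1 - ν 1, ν' 0 - ν 0]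

/-- The Euclidean norm on `ℝ²`. -/
noncomputable def euclNorm (v : Fin 2 → ℝ) : ℝ := Real.sqrt (v 0 ^ 2 + v 1 ^ 2)

/-!
The interpolant is affine in `ρ t`, and `𝔸(x) y = 𝔸₀(y) (x - ν)` with `𝔸₀ := matA 0`, both sides
being the complex product of `x - ν` and `y`. Hence `(u_I^R)⁽ᵐ⁾ = 𝔸₀(w) ρ⁽ᵐ⁾` with
`w = 𝔹⁻¹ (u(L) - u(0))`, whose norm is `‖w‖ ‖ρ⁽ᵐ⁾‖ ≤ M ‖w‖`. Multiplicativity of the norm also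
gives `‖u(L) - u(0)‖ = ‖ρ(L) - ρ(0)‖ ‖w‖ ≥ c L ‖w‖`, and Cauchy–Schwarz gives
`‖u(L) - u(0)‖ = ‖∫ u'‖ ≤ √L ‖u'‖_{L²}`. So `‖(u_I^R)⁽ᵐ⁾‖_{L²} ≤ √L M ‖w‖ ≤ (M / c) ‖u'‖_{L²}`.
-/

open Matrix

lemma euclNorm_eq_norm_toLp (v : Fin 2 → ℝ) :
    euclNorm v = ‖(WithLp.toLp 2 v : EuclideanSpace ℝ (Fin 2))‖ := by
  simp [euclNorm, EuclideanSpace.norm_eq, Fin.sum_univ_two]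

lemma euclNorm_nonneg (v : Fin 2 → ℝ) : 0 ≤ euclNorm v := Real.sqrt_nonneg _

lemma matB_eq_matA : matB = matA := rfl

lemma matA_mulVec_comm (ν x w : Fin 2 → ℝ) :
    matA ν x *ᵥ w = matA 0 w *ᵥ (x - ν) := by
  ext i
  fin_cases i <;> simp [matA, mulVec, dotProduct, Fin.sum_univ_two] <;> ring

lemma euclNorm_matA_mulVec (ν x w : Fin 2 → ℝ) :
    euclNorm (matA ν x *ᵥ w) = euclNorm (x - ν) * euclNorm w := by
  rw [euclNorm, euclNorm, euclNorm, ← Real.sqrt_mul (by positivity)]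
  congr 1
  simp only [matA, mulVec, dotProduct, of_apply, cons_val', cons_val_fin_one, cons_val_zero,
    cons_val_one, Fin.sum_univ_two, Pi.sub_apply]
  ring

lemma det_matA (ν x : Fin 2 → ℝ) : (matA ν x).det = euclNorm (x - ν) ^ 2 := by
  rw [euclNorm, Real.sq_sqrt (by positivity)]
  simp only [matA, det_fin_two_of, Pi.sub_apply]
  ring

lemma ContinuousLinearMap.iteratedDeriv_comp_left {𝕜 F G : Type*} [NontriviallyNormedField 𝕜]
    [NormedAddCommGroup F] [NormedSpace 𝕜 F] [NormedAddCommGroup G] [NormedSpace 𝕜 G]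
    {n : ℕ} (g : F →L[𝕜] G) {f : 𝕜 → F} {x : 𝕜} (hf : ContDiffAt 𝕜 n f x) :
    iteratedDeriv n (fun s => g (f s)) x = g (iteratedDeriv n f x) := by
  simp only [iteratedDeriv_eq_iteratedFDeriv, ← Function.comp_def,
    g.iteratedFDeriv_comp_left hf le_rfl]
  rfl

lemma iteratedDeriv_const_add_mulVec_sub {ι κ : Type*} [Fintype ι] [Fintype κ] {n : ℕ}
    (hn : 0 < n) (a : ι → ℝ) (A : Matrix ι κ ℝ) (b : κ → ℝ) {f : ℝ → κ → ℝ} {t : ℝ}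
    (hf : ContDiffAt ℝ n f t) :
    iteratedDeriv n (fun s => a + A *ᵥ (f s - b)) t = A *ᵥ iteratedDeriv n f t := by
  let T : (κ → ℝ) →L[ℝ] (ι → ℝ) := LinearMap.toContinuousLinearMap A.mulVecLin
  have hT : ∀ x, T x = A *ᵥ x := fun _ => rfl
  have hshift : (fun s => a + A *ᵥ (f s - b)) = fun s => (a - A *ᵥ b) + T (f s) := by
    funext s
    rw [hT, mulVec_sub]
    abel
  rw [hshift, iteratedDeriv_const_add hn, T.iteratedDeriv_comp_left hf, hT]

lemma intervalIntegral_sq_le_of_abs_le {a b K : ℝ} (hab : a ≤ b) {f : ℝ → ℝ}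
    (hf : ∀ t ∈ Set.Ioc a b, |f t| ≤ K) :
    ∫ t in a..b, f t ^ 2 ≤ (b - a) * K ^ 2 := by
  have hsq : ∀ t ∈ Set.uIoc a b, ‖f t ^ 2‖ ≤ K ^ 2 := fun t ht => by
    rw [Set.uIoc_of_le hab] at ht
    simpa [sq_abs] using pow_le_pow_left₀ (abs_nonneg _) (hf t ht) 2
  calc ∫ t in a..b, f t ^ 2 ≤ ‖∫ t in a..b, f t ^ 2‖ := Real.le_norm_self _
    _ ≤ K ^ 2 * |b - a| := intervalIntegral.norm_integral_le_of_norm_le_const hsq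
    _ = (b - a) * K ^ 2 := by rw [abs_of_nonneg (sub_nonneg.2 hab), mul_comm]

lemma intervalIntegral_le_sqrt_mul_sqrt_integral_sq {a b : ℝ} (hab : a ≤ b) {f : ℝ → ℝ}
    (hf0 : ∀ t, 0 ≤ f t) (hf2 : IntegrableOn (fun t => f t ^ 2) (Set.Ioc a b)) :
    ∫ t in a..b, f t ≤ √(b - a) * √(∫ t in a..b, f t ^ 2) := by
  have hf : AEStronglyMeasurable f (volume.restrict (Set.Ioc a b)) := by
    simpa [Real.sqrt_sq (hf0 _)] using
      Real.continuous_sqrt.comp_aestronglyMeasurable hf2.aestronglyMeasurable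
  have hf_memLp : MemLp f (ENNReal.ofReal 2) (volume.restrict (Set.Ioc a b)) := by
    simpa using (memLp_two_iff_integrable_sq hf).2 hf2
  have hholder := integral_mul_le_Lp_mul_Lq_of_nonneg Real.HolderConjugate.two_two
    (Filter.Eventually.of_forall hf0) (Filter.Eventually.of_forall fun _ => zero_le_one)
    hf_memLp (by simpa using memLp_const (1 : ℝ))
  simp only [mul_one, Real.one_rpow, ← Real.sqrt_eq_rpow] at hholder
  norm_num [MeasureTheory.integral_const, Real.volume_real_Ioc_of_le hab] at hholder
  simpa only [intervalIntegral.integral_of_le hab, mul_comm (√(b - a))] using hholder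

lemma euclNorm_intervalIntegral_le {a b : ℝ} (hab : a ≤ b) (f : ℝ → Fin 2 → ℝ) :
    euclNorm (∫ t in a..b, f t) ≤ ∫ t in a..b, euclNorm (f t) := by
  simp only [intervalIntegral.integral_of_le hab, euclNorm_eq_norm_toLp]
  rw [← PiLp.coe_symm_continuousLinearEquiv 2 ℝ, ← ContinuousLinearEquiv.integral_comp_comm]
  exact norm_integral_le_integral_norm _

theorem rigid_interpolant_stability_general (m : ℕ) (hm : 1 ≤ m) (L c M : ℝ)
    (hL : 0 < L) (hc : 0 < c)
    (ρ : ℝ → Fin 2 → ℝ) (hρ : ContDiff ℝ m ρ)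
    (hbound : ∀ t ∈ Set.Icc 0 L, euclNorm (iteratedDeriv m ρ t) ≤ M)
    (hchord : c * L ≤ euclNorm (ρ L - ρ 0))
    (u u' : ℝ → Fin 2 → ℝ)
    (hL2 : IntegrableOn (fun t => euclNorm (u' t) ^ 2) (Set.Icc 0 L))
    (hAC : ∀ t ∈ Set.Icc 0 L, u t = u 0 + ∫ s in (0:ℝ)..t, u' s) :
    Real.sqrt (∫ t in (0:ℝ)..L,
        euclNorm (iteratedDeriv m
          (fun t => u 0 +
            (matA (ρ 0) (ρ t)).mulVec ((matB (ρ 0) (ρ L))⁻¹.mulVec (u L - u 0))) t) ^ 2) ≤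
      (M / c) * Real.sqrt (∫ t in (0:ℝ)..L, euclNorm (u' t) ^ 2) := by
  set v := u L - u 0 with hv_def
  set w := (matB (ρ 0) (ρ L))⁻¹ *ᵥ v
  set U := √(∫ t in (0:ℝ)..L, euclNorm (u' t) ^ 2)
  have hM : 0 ≤ M := (euclNorm_nonneg _).trans (hbound 0 ⟨le_rfl, hL.le⟩)
  have hchord_pos : 0 < euclNorm (ρ L - ρ 0) := (mul_pos hc hL).trans_le hchord
  have hv_eq : euclNorm v = euclNorm (ρ L - ρ 0) * euclNorm w := by
    have hdet : IsUnit (matB (ρ 0) (ρ L)).det := by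
      rw [matB_eq_matA, det_matA, isUnit_iff_ne_zero]
      exact pow_ne_zero 2 hchord_pos.ne'
    rw [← euclNorm_matA_mulVec, ← matB_eq_matA, mulVec_mulVec, mul_nonsing_inv _ hdet,
      one_mulVec]
  have hv_le : euclNorm v ≤ √L * U := by
    have hv_int : v = ∫ t in (0:ℝ)..L, u' t := by
      rw [hv_def, hAC L ⟨hL.le, le_rfl⟩, add_sub_cancel_left]
    simpa only [hv_int, sub_zero] using (euclNorm_intervalIntegral_le hL.le u').trans
      (intervalIntegral_le_sqrt_mul_sqrt_integral_sq hL.le (fun t => euclNorm_nonneg _)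
        (hL2.mono_set Set.Ioc_subset_Icc_self))
  have hderiv : ∀ t, iteratedDeriv m (fun t => u 0 + matA (ρ 0) (ρ t) *ᵥ w) t =
      matA 0 w *ᵥ iteratedDeriv m ρ t := fun t => by
    simp only [matA_mulVec_comm _ _ w]
    exact iteratedDeriv_const_add_mulVec_sub hm _ _ _ hρ.contDiffAt
  have hlhs : ∫ t in (0:ℝ)..L,
      euclNorm (iteratedDeriv m (fun t => u 0 + matA (ρ 0) (ρ t) *ᵥ w) t) ^ 2
        ≤ L * (euclNorm w * M) ^ 2 := by
    simpa only [sub_zero] using intervalIntegral_sq_le_of_abs_le hL.le fun t ht => by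
      rw [hderiv, euclNorm_matA_mulVec, sub_zero,
        abs_of_nonneg (mul_nonneg (euclNorm_nonneg _) (euclNorm_nonneg _))]
      exact mul_le_mul_of_nonneg_left (hbound t (Set.Ioc_subset_Icc_self ht)) (euclNorm_nonneg w)
  have hw : c * √L * euclNorm w ≤ U := by
    refine le_of_mul_le_mul_right ?_ (Real.sqrt_pos.2 hL)
    calc c * √L * euclNorm w * √L = c * L * euclNorm w := by
          linear_combination c * euclNorm w * Real.mul_self_sqrt hL.le
      _ ≤ euclNorm (ρ L - ρ 0) * euclNorm w :=
          mul_le_mul_of_nonneg_right hchord (euclNorm_nonneg w)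
      _ = euclNorm v := hv_eq.symm
      _ ≤ U * √L := mul_comm (√L) U ▸ hv_le
  calc _ ≤ √(L * (euclNorm w * M) ^ 2) := Real.sqrt_le_sqrt hlhs
    _ = M / c * (c * √L * euclNorm w) := by
      rw [Real.sqrt_mul hL.le, Real.sqrt_sq (mul_nonneg (euclNorm_nonneg w) hM)]
      field_simp
    _ ≤ M / c * U := by gcongr

/-- Stability of the rigid-type interpolant.  Let `m ≥ 1`, `L, c, M > 0`, let `ρ` be
`m`-times continuously differentiable with `‖ρ⁽ᵐ⁾(t)‖ ≤ M` on `[0,L]` and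
`‖ρ(L) − ρ(0)‖ ≥ c·L`, and let `u` be absolutely continuous with `u' ∈ L²(0,L)`.
Then the rigid-type interpolant `u_I^R(t) = u(0) + 𝔸(ρ(t))𝔹⁻¹(u(L) − u(0))` (with `𝔸`
anchored at `ρ(0)` and `𝔹` built from `ρ(0), ρ(L)`) satisfies
`‖(u_I^R)⁽ᵐ⁾‖_{L²(0,L)} ≤ (M/c)·‖u'‖_{L²(0,L)}`. -/
theorem rigid_interpolant_stability (m : ℕ) (hm : 1 ≤ m) (L c M : ℝ)
    (hL : 0 < L) (hc : 0 < c) (hM : 0 < M)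
    (ρ : ℝ → Fin 2 → ℝ) (hρ : ContDiff ℝ m ρ)
    (hbound : ∀ t ∈ Set.Icc 0 L, euclNorm (iteratedDeriv m ρ t) ≤ M)
    (hchord : c * L ≤ euclNorm (ρ L - ρ 0))
    (u u' : ℝ → Fin 2 → ℝ)
    (hint : IntervalIntegrable u' volume 0 L)
    (hL2 : IntegrableOn (fun t => euclNorm (u' t) ^ 2) (Set.Icc 0 L))
    (hAC : ∀ t ∈ Set.Icc 0 L, u t = u 0 + ∫ s in (0:ℝ)..t, u' s) :
    Real.sqrt (∫ t in (0:ℝ)..L,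
        euclNorm (iteratedDeriv m
          (fun t => u 0 +
            (matA (ρ 0) (ρ t)).mulVec ((matB (ρ 0) (ρ L))⁻¹.mulVec (u L - u 0))) t) ^ 2) ≤
      (M / c) * Real.sqrt (∫ t in (0:ℝ)..L, euclNorm (u' t) ^ 2) :=
  rigid_interpolant_stability_general m hm L c M hL hc ρ hρ hbound hchord u u' hL2 hAC
end

section
/- (Unisolvence of pointwise degrees of freedom for the curved edge space.) Let k ≥ 1, a < b, let γ : [a, b] → ℝ² satisfy γ(a) ≠ γ(b), and let a = t₁ < t₂ < ⋯ < t_{k+1} = b be k+1 distinct points. Then the evaluation map v ↦ (v(t₁), …, v(t_{k+1})) is a linear isomorphism from the space V = R + B onto (ℝ²)^{k+1}; in particular, for every choice of values w₁, …, w_{k+1} ∈ ℝ² there is a unique v ∈ R + B with v(tᵢ) = wᵢ for all i, and the dimension of V equals 2(k+1). -/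
/-- `R`: the space of functions `t ↦ a₀ + 𝔸(γ(t))b₀` with `a₀, b₀ ∈ ℝ²`, where `𝔸` is
anchored at `ν̄ = γ(a)`. -/
def Rspace (γ : ℝ → Fin 2 → ℝ) (a : ℝ) : Submodule ℝ (ℝ → Fin 2 → ℝ) where
  carrier := {f | ∃ a₀ b₀ : Fin 2 → ℝ, ∀ t : ℝ, f t = a₀ + (matA (γ a) (γ t)).mulVec b₀}
  add_mem' := by
    rintro f g ⟨a₀, b₀, hf⟩ ⟨a₁, b₁, hg⟩
    exact ⟨a₀ + a₁, b₀ + b₁, fun t => by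
      simp only [Pi.add_apply, hf t, hg t, Matrix.mulVec_add]; abel⟩
  zero_mem' := ⟨0, 0, fun t => by simp⟩
  smul_mem' := by
    rintro r f ⟨a₀, b₀, hf⟩
    exact ⟨r • a₀, r • b₀, fun t => by
      simp only [Pi.smul_apply, hf t, Matrix.mulVec_smul, smul_add]⟩

/-- `B`: the space of `ℝ²`-valued polynomial functions of degree at most `k` vanishing at
`a` and `b`. -/
def Bspace (k : ℕ) (a b : ℝ) : Submodule ℝ (ℝ → Fin 2 → ℝ) where
  carrier := {f | (∃ p : Fin 2 → Polynomial ℝ, (∀ i, (p i).natDegree ≤ k) ∧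
      ∀ t : ℝ, ∀ i, f t i = (p i).eval t) ∧ f a = 0 ∧ f b = 0}
  add_mem' := by
    rintro f g ⟨⟨p, hpd, hpe⟩, hfa, hfb⟩ ⟨⟨q, hqd, hqe⟩, hga, hgb⟩
    refine ⟨⟨fun i => p i + q i, fun i => ?_, fun t i => ?_⟩, ?_, ?_⟩
    · exact le_trans (Polynomial.natDegree_add_le _ _) (max_le (hpd i) (hqd i))
    · simp [hpe t i, hqe t i]
    · simp [Pi.add_apply, hfa, hga]
    · simp [Pi.add_apply, hfb, hgb]
  zero_mem' := ⟨⟨fun _ => 0, fun i => by simp, fun t i => by simp⟩, rfl, rfl⟩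
  smul_mem' := by
    rintro r f ⟨⟨p, hpd, hpe⟩, hfa, hfb⟩
    refine ⟨⟨fun i => r • p i, fun i => ?_, fun t i => ?_⟩, ?_, ?_⟩
    · exact le_trans (Polynomial.natDegree_smul_le _ _) (hpd i)
    · simp [hpe t i]
    · simp [Pi.smul_apply, hfa]
    · simp [Pi.smul_apply, hfb]


lemma matA_self (ν : Fin 2 → ℝ) : matA ν ν = 0 := by
  ext i j; fin_cases i <;> fin_cases j <;> simp [matA]

lemma matA_isUnit_det {ν x : Fin 2 → ℝ} (h : x ≠ ν) : IsUnit (matA ν x).det := by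
  rw [matA, Matrix.det_fin_two_of]
  refine isUnit_iff_ne_zero.mpr fun hc => h ?_
  have hsum : (x 0 - ν 0) ^ 2 + (x 1 - ν 1) ^ 2 = 0 := by nlinarith [hc]
  have h1 : (x 0 - ν 0) ^ 2 = 0 :=
    le_antisymm (by nlinarith [sq_nonneg (x 1 - ν 1)]) (sq_nonneg _)
  have h2 : (x 1 - ν 1) ^ 2 = 0 :=
    le_antisymm (by nlinarith [sq_nonneg (x 0 - ν 0)]) (sq_nonneg _)
  have e1 : x 0 = ν 0 := by nlinarith [h1]
  have e2 : x 1 = ν 1 := by nlinarith [h2]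
  funext i; fin_cases i
  · exact e1
  · exact e2

lemma key_inj (k : ℕ) (a b : ℝ) (γ : ℝ → Fin 2 → ℝ) (hγ : γ a ≠ γ b)
    (t : Fin (k + 1) → ℝ) (htinj : Function.Injective t) (h0 : t 0 = a)
    (hlast : t (Fin.last k) = b)
    (f : ℝ → Fin 2 → ℝ) (hf : f ∈ Rspace γ a ⊔ Bspace k a b)
    (hz : ∀ i, f (t i) = 0) : f = 0 := by
  rw [Submodule.mem_sup] at hf
  obtain ⟨r, ⟨a₀, b₀, hr⟩, p, ⟨⟨q, hqd, hqe⟩, hpa, hpb⟩, rfl⟩ := hf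
  have hra : r a = a₀ := by rw [hr a, matA_self, Matrix.zero_mulVec, add_zero]
  have ha0 : a₀ = 0 := by
    have h1 : r (t 0) + p (t 0) = 0 := hz 0
    rw [h0, hpa, add_zero, hra] at h1
    exact h1
  have hb0 : b₀ = 0 := by
    have h1 : r (t (Fin.last k)) + p (t (Fin.last k)) = 0 := hz (Fin.last k)
    rw [hlast, hpb, add_zero, hr b, ha0, zero_add] at h1
    have hA : IsUnit (matA (γ a) (γ b)).det :=
      matA_isUnit_det (fun h => hγ h.symm)
    have h2 := congrArg ((matA (γ a) (γ b))⁻¹.mulVec) h1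
    rwa [Matrix.mulVec_mulVec, Matrix.nonsing_inv_mul _ hA, Matrix.one_mulVec,
      Matrix.mulVec_zero] at h2
  have hr0 : r = 0 := by
    funext s
    rw [hr s, ha0, hb0, Matrix.mulVec_zero, add_zero]
    rfl
  have hq0 : ∀ i, q i = 0 := by
    intro i
    apply Polynomial.eq_zero_of_degree_lt_of_eval_index_eq_zero
      (Finset.univ) htinj.injOn
    · have hle : (q i).degree < ((k + 1 : ℕ) : WithBot ℕ) := by
        calc (q i).degree ≤ ((q i).natDegree : WithBot ℕ) := Polynomial.degree_le_natDegree
        _ ≤ (k : WithBot ℕ) := by exact_mod_cast hqd i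
        _ < _ := by exact_mod_cast Nat.lt_succ_self k
      simpa using hle
    · intro j _
      have h1 : r (t j) + p (t j) = 0 := hz j
      rw [hr0] at h1
      simp only [Pi.zero_apply, zero_add] at h1
      rw [← hqe (t j) i]
      have := congrFun h1 i
      simpa using this
  have hp0 : p = 0 := by
    funext s i
    rw [hqe s i, hq0 i]
    simp
  rw [hr0, hp0]; simp

lemma key_surj (k : ℕ) (a b : ℝ) (γ : ℝ → Fin 2 → ℝ) (hγ : γ a ≠ γ b)
    (t : Fin (k + 1) → ℝ) (htinj : Function.Injective t) (h0 : t 0 = a)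
    (hlast : t (Fin.last k) = b)
    (w : Fin (k + 1) → Fin 2 → ℝ) :
    ∃ f ∈ Rspace γ a ⊔ Bspace k a b, ∀ i, f (t i) = w i := by
  have hA : IsUnit (matA (γ a) (γ b)).det := matA_isUnit_det (fun h => hγ h.symm)
  set b₀ : Fin 2 → ℝ := (matA (γ a) (γ b))⁻¹.mulVec (w (Fin.last k) - w 0) with hb₀
  set r : ℝ → Fin 2 → ℝ := fun s => w 0 + (matA (γ a) (γ s)).mulVec b₀ with hrdef
  have hrR : r ∈ Rspace γ a := ⟨w 0, b₀, fun s => rfl⟩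
  have hra : r a = w 0 := by
    rw [hrdef]
    simp [matA_self]
  have hrb : r b = w (Fin.last k) := by
    show w 0 + (matA (γ a) (γ b)).mulVec b₀ = _
    rw [hb₀, Matrix.mulVec_mulVec, Matrix.mul_nonsing_inv _ hA, Matrix.one_mulVec]
    simp
  set q : Fin 2 → Polynomial ℝ :=
    fun i => Lagrange.interpolate Finset.univ t (fun j => w j i - r (t j) i) with hq
  have heval : ∀ j i, (q i).eval (t j) = w j i - r (t j) i := fun j i =>
    Lagrange.eval_interpolate_at_node _ htinj.injOn (Finset.mem_univ j)
  set p : ℝ → Fin 2 → ℝ := fun s i => (q i).eval s with hp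
  have hdeg : ∀ i, (q i).natDegree ≤ k := by
    intro i
    rcases eq_or_ne (q i) 0 with h | h
    · simp [h]
    · have hd := Lagrange.degree_interpolate_lt
        (s := (Finset.univ : Finset (Fin (k + 1)))) (v := t)
        (r := fun j => w j i - r (t j) i) htinj.injOn
      rw [show ((Finset.univ : Finset (Fin (k + 1))).card) = k + 1 from by simp] at hd
      have := (Polynomial.natDegree_lt_iff_degree_lt h).mpr hd
      omega
  have hptj : ∀ j, p (t j) = w j - r (t j) := by
    intro j; funext i; exact heval j i
  have hpB : p ∈ Bspace k a b := by
    refine ⟨⟨q, hdeg, fun s i => rfl⟩, ?_, ?_⟩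
    · rw [← h0, hptj 0, h0, hra]; simp
    · rw [← hlast, hptj (Fin.last k), hlast, hrb]; simp
  refine ⟨r + p, Submodule.mem_sup.mpr ⟨r, hrR, p, hpB, rfl⟩, fun i => ?_⟩
  show r (t i) + p (t i) = w i
  rw [hptj i]
  abel

/-- Unisolvence of the pointwise degrees of freedom for the curved edge space `V = R + B`:
evaluation at the `k+1` nodes is a bijection onto `(ℝ²)^{k+1}`; for every choice of values
there is a unique `v ∈ R + B` attaining them, and `dim V = 2(k+1)`. -/
theorem unisolvence_curved_edge_space (k : ℕ) (hk : 1 ≤ k) (a b : ℝ) (hab : a < b)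
    (γ : ℝ → Fin 2 → ℝ) (hγ : γ a ≠ γ b)
    (t : Fin (k + 1) → ℝ) (hmono : StrictMono t) (h0 : t 0 = a)
    (hlast : t (Fin.last k) = b) :
    Function.Bijective
      (fun v : (Rspace γ a ⊔ Bspace k a b : Submodule ℝ (ℝ → Fin 2 → ℝ)) =>
        (fun i => (v : ℝ → Fin 2 → ℝ) (t i) : Fin (k + 1) → Fin 2 → ℝ)) ∧
    (∀ w : Fin (k + 1) → Fin 2 → ℝ, ∃! v : ℝ → Fin 2 → ℝ,
      v ∈ Rspace γ a ⊔ Bspace k a b ∧ ∀ i, v (t i) = w i) ∧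
    Module.finrank ℝ (Rspace γ a ⊔ Bspace k a b : Submodule ℝ (ℝ → Fin 2 → ℝ)) =
      2 * (k + 1) := by
  classical
  have hne : a ≠ b := ne_of_lt hab
  have htinj := hmono.injective
  let E : (Rspace γ a ⊔ Bspace k a b : Submodule ℝ (ℝ → Fin 2 → ℝ)) →ₗ[ℝ]
      (Fin (k + 1) → Fin 2 → ℝ) :=
    { toFun := fun v i => (v : ℝ → Fin 2 → ℝ) (t i)
      map_add' := fun u v => rfl
      map_smul' := fun c v => rfl }
  have hinj : Function.Injective E := by
    rw [injective_iff_map_eq_zero]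
    rintro ⟨f, hf⟩ h
    have hz : ∀ i, f (t i) = 0 := fun i => congrFun h i
    exact Subtype.ext (key_inj k a b γ hγ t htinj h0 hlast f hf hz)
  have hsurj : Function.Surjective E := by
    intro w
    obtain ⟨f, hf, hfe⟩ := key_surj k a b γ hγ t htinj h0 hlast w
    exact ⟨⟨f, hf⟩, funext hfe⟩
  have hbij : Function.Bijective E := ⟨hinj, hsurj⟩
  refine ⟨hbij, ?_, ?_⟩
  · intro w
    obtain ⟨⟨f, hf⟩, hfe⟩ := hsurj w
    refine ⟨f, ⟨hf, fun i => congrFun hfe i⟩, ?_⟩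
    rintro g ⟨hg, hge⟩
    have heq : E ⟨g, hg⟩ = E ⟨f, hf⟩ := by
      rw [hfe]; exact funext hge
    exact congrArg Subtype.val (hinj heq)
  · rw [LinearEquiv.finrank_eq (LinearEquiv.ofBijective E hbij),
      Module.finrank_pi_fintype]
    simp [Module.finrank_pi]
    ring
end

section
/- (Straight-edge consistency of the new space.) Let k ≥ 1, a < b, and let γ : [a, b] → ℝ² be affine, γ(t) = p₀ + t·d with d ∈ ℝ², d ≠ 0. Then R + B equals the space of all ℝ²-valued polynomial functions on [a, b] of degree at most k; i.e., in the straight-edge case the curved edge space recovers the standard polynomial space 𝒫_k(e)². -/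
/-- `𝒫_k(e)²`: the space of `ℝ²`-valued polynomial functions of degree at most `k`. -/
def Pspace (k : ℕ) : Submodule ℝ (ℝ → Fin 2 → ℝ) where
  carrier := {f | ∃ p : Fin 2 → Polynomial ℝ, (∀ i, (p i).natDegree ≤ k) ∧
      ∀ t : ℝ, ∀ i, f t i = (p i).eval t}
  add_mem' := by
    rintro f g ⟨p, hpd, hpe⟩ ⟨q, hqd, hqe⟩
    exact ⟨fun i => p i + q i,
      fun i => le_trans (Polynomial.natDegree_add_le _ _) (max_le (hpd i) (hqd i)),
      fun t i => by simp [hpe t i, hqe t i]⟩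
  zero_mem' := ⟨fun _ => 0, fun i => by simp, fun t i => by simp⟩
  smul_mem' := by
    rintro r f ⟨p, hpd, hpe⟩
    exact ⟨fun i => r • p i,
      fun i => le_trans (Polynomial.natDegree_smul_le _ _) (hpd i),
      fun t i => by simp [hpe t i]⟩

/-!
For a straight edge `γ(t) = p₀ + t • d`, the matrix `𝔸(γ(t))` anchored at `γ(a)` is `(t - a)`
times the matrix of multiplication by the complex number `d₀ + i d₁`, which is invertible for
`d ≠ 0`. Hence `R` is exactly the space of affine maps, i.e. `𝒫₁(e)²`. Finally every
`f ∈ 𝒫_k(e)²` splits as its linear interpolant at `a, b` plus a remainder vanishing at both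
endpoints, so `𝒫₁(e)² + B = 𝒫_k(e)²` as soon as `k ≥ 1` and `a ≠ b`.
-/

open Polynomial

lemma matA_eq_matA_zero_sub (ν x : Fin 2 → ℝ) : matA ν x = matA 0 (x - ν) := by
  simp [matA]

lemma matA_zero_smul (c : ℝ) (x : Fin 2 → ℝ) : matA 0 (c • x) = c • matA 0 x := by
  ext i j
  fin_cases i <;> fin_cases j <;> simp [matA]

lemma det_matA_zero (x : Fin 2 → ℝ) : (matA 0 x).det = x 0 ^ 2 + x 1 ^ 2 := by
  simp only [matA, Pi.zero_apply, sub_zero, Matrix.det_fin_two_of]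
  ring

lemma mulVec_matA_zero_surjective {x : Fin 2 → ℝ} (hx : x ≠ 0) :
    Function.Surjective (matA 0 x).mulVec := by
  rw [Matrix.mulVec_surjective_iff_isUnit, Matrix.isUnit_iff_isUnit_det, det_matA_zero,
    isUnit_iff_ne_zero]
  contrapose! hx
  have h0 : x 0 = 0 := by nlinarith [sq_nonneg (x 0), sq_nonneg (x 1)]
  have h1 : x 1 = 0 := by nlinarith [sq_nonneg (x 0), sq_nonneg (x 1)]
  ext i
  fin_cases i <;> simp [h0, h1]

lemma mem_Pspace_one_iff {f : ℝ → Fin 2 → ℝ} :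
    f ∈ Pspace 1 ↔ ∃ c v : Fin 2 → ℝ, ∀ t, f t = c + t • v := by
  constructor
  · rintro ⟨p, hdeg, heval⟩
    refine ⟨fun i => (p i).coeff 0, fun i => (p i).coeff 1, fun t => funext fun i => ?_⟩
    rw [heval, eq_X_add_C_of_natDegree_le_one (hdeg i)]
    simp only [eval_add, eval_mul, eval_C, eval_X, Pi.add_apply, Pi.smul_apply, smul_eq_mul]
    ring
  · rintro ⟨c, v, hf⟩
    refine ⟨fun i => C (v i) * X + C (c i), fun i => ?_, fun t i => ?_⟩
    · exact natDegree_linear_le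
    · simp only [hf, eval_add, eval_mul, eval_C, eval_X, Pi.add_apply, Pi.smul_apply,
        smul_eq_mul]
      ring

lemma Rspace_affine {p₀ d : Fin 2 → ℝ} (a : ℝ) (hd : d ≠ 0) :
    Rspace (fun s : ℝ => p₀ + s • d) a = Pspace 1 := by
  have hmat : ∀ t b₀, (matA (p₀ + a • d) (p₀ + t • d)).mulVec b₀
      = (t - a) • (matA 0 d).mulVec b₀ := fun t b₀ => by
    rw [matA_eq_matA_zero_sub, add_sub_add_left_eq_sub, ← sub_smul, matA_zero_smul,
      Matrix.smul_mulVec]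
  ext f
  rw [mem_Pspace_one_iff]
  change (∃ a₀ b₀ : Fin 2 → ℝ, ∀ t, f t = a₀ + _) ↔ _
  simp only [hmat]
  constructor
  · rintro ⟨a₀, b₀, hf⟩
    exact ⟨a₀ - a • (matA 0 d).mulVec b₀, (matA 0 d).mulVec b₀, fun t => by
      rw [hf, sub_smul]; abel⟩
  · rintro ⟨c, v, hf⟩
    obtain ⟨b₀, rfl⟩ := mulVec_matA_zero_surjective hd v
    exact ⟨c + a • (matA 0 d).mulVec b₀, b₀, fun t => by rw [hf, sub_smul]; abel⟩

lemma Pspace_mono {k m : ℕ} (hkm : k ≤ m) : Pspace k ≤ Pspace m :=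
  fun _ ⟨p, hdeg, heval⟩ => ⟨p, fun i => (hdeg i).trans hkm, heval⟩

lemma mem_Bspace_iff {k : ℕ} {a b : ℝ} {f : ℝ → Fin 2 → ℝ} :
    f ∈ Bspace k a b ↔ f ∈ Pspace k ∧ f a = 0 ∧ f b = 0 :=
  Iff.rfl

lemma Bspace_le_Pspace (k : ℕ) (a b : ℝ) : Bspace k a b ≤ Pspace k :=
  fun _ hf => (mem_Bspace_iff.mp hf).1

lemma Pspace_one_sup_Bspace {k : ℕ} (hk : 1 ≤ k) {a b : ℝ} (hab : a ≠ b) :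
    Pspace 1 ⊔ Bspace k a b = Pspace k := by
  refine le_antisymm (sup_le (Pspace_mono hk) (Bspace_le_Pspace k a b)) fun f hf => ?_
  set v : Fin 2 → ℝ := (b - a)⁻¹ • (f b - f a)
  set L : ℝ → Fin 2 → ℝ := fun t => f a + (t - a) • v
  have hL : L ∈ Pspace 1 :=
    mem_Pspace_one_iff.mpr ⟨f a - a • v, v, fun t => by simp only [L, sub_smul]; abel⟩
  have hLb : L b = f b := by
    simp only [L, v, smul_smul, mul_inv_cancel₀ (sub_ne_zero.mpr hab.symm), one_smul]
    abel
  have hrem : f - L ∈ Bspace k a b :=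
    mem_Bspace_iff.mpr ⟨sub_mem hf (Pspace_mono hk hL), by simp [L], by simp [hLb]⟩
  simpa using Submodule.add_mem_sup hL hrem

/-- Straight-edge consistency of the new space: if `γ(t) = p₀ + t·d` is affine with `d ≠ 0`,
then `R + B` equals the space of all `ℝ²`-valued polynomial functions of degree at most `k`,
i.e. the curved edge space recovers the standard polynomial space `𝒫_k(e)²`. -/
theorem straight_edge_consistency (k : ℕ) (hk : 1 ≤ k) (a b : ℝ) (hab : a < b)
    (p₀ d : Fin 2 → ℝ) (hd : d ≠ 0) :
    Rspace (fun s : ℝ => p₀ + s • d) a ⊔ Bspace k a b = Pspace k := by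
  rw [Rspace_affine a hd]
  exact Pspace_one_sup_Bspace hk hab.ne
end
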